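/- arXiv:1302.2101 — 2 statements merged into one kernel-verified Lean document; each statement's English description precedes it below -/
import Mathlib

section
/- Let A be a (possibly noncommutative) ring that is an algebra over ℚ, and let K, S, K', T ∈ A satisfy S*T = -(1/4)•1 + K*K, T*S = -(1/4)•1 + K'*K', K*S = S*K', and T*K = K'*T. Assume S, K − (1/2)•1, and K' − (1/2)•1 are invertible in A. Then the four elements (K' − (1/2)•1)⁻¹ * T, S⁻¹ * (K + (1/2)•1), T * (K − (1/2)•1)⁻¹, and (K' + (1/2)•1) * S⁻¹ are all equal. (This common element is the exterior Dirichlet-to-Neumann map Λ₊.) -/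
/-!
Write `c = (1/2) • 1`, which is central with `c * c = (1/4) • 1`. The Calderón identities factor
as `S T = (K - c)(K + c) = (K + c)(K - c)` and `T S = (K' + c)(K' - c)`, and `K S = S K'` says
that `S` intertwines `K' - c` with `K - c`. Each of the three equalities then clears its inverses
into one of these factorizations; only monoid identities are involved.
-/

theorem SemiconjBy.invOf_symm_left {M : Type*} [Monoid M] {a x y : M} [Invertible a]
    (h : SemiconjBy a x y) : SemiconjBy (⅟a) y x := by
  rw [SemiconjBy, eq_comm, mul_invOf_eq_iff_eq_mul_right, mul_assoc, ← h.eq,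
    invOf_mul_cancel_left]

section Intertwining

variable {M : Type*} [Monoid M] {S T m p m' p' : M} [Invertible S]

theorem invOf_mul_eq_invOf_mul_of_mul_eq [Invertible m'] (hST : S * T = m * p)
    (hS : SemiconjBy S m' m) : ⅟m' * T = ⅟S * p := by
  rw [invOf_mul_eq_iff_eq_mul_left, ← mul_assoc, ← hS.invOf_symm_left.eq, mul_assoc, ← hST,
    invOf_mul_cancel_left]

theorem invOf_mul_eq_mul_invOf_of_mul_eq [Invertible m] (hST : S * T = p * m) :
    ⅟S * p = T * ⅟m := by
  rw [invOf_mul_eq_iff_eq_mul_left, ← mul_assoc, hST, mul_invOf_cancel_right]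

theorem mul_invOf_eq_mul_invOf_of_mul_eq [Invertible m] (hTS : T * S = p' * m')
    (hS : SemiconjBy S m' m) : T * ⅟m = p' * ⅟S := by
  rw [mul_invOf_eq_iff_eq_mul_right, mul_assoc, hS.invOf_symm_left.eq, ← mul_assoc, ← hTS,
    mul_invOf_cancel_right]

end Intertwining

section ScalarShift

variable {R A : Type*} [CommRing R] [Ring A] [Algebra R A]

theorem commute_smul_one (x : A) (r : R) : Commute x (r • (1 : A)) :=
  (Commute.one_right x).smul_right r

theorem smul_one_mul_self (r : R) : r • (1 : A) * r • (1 : A) = (r * r) • (1 : A) := by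
  rw [smul_mul_smul_comm, mul_one]

theorem neg_smul_one_add_mul_self_eq (r : R) (x : A) :
    -((r * r) • (1 : A)) + x * x = (x + r • (1 : A)) * (x - r • (1 : A)) := by
  rw [neg_add_eq_sub, ← smul_one_mul_self, (commute_smul_one x r).mul_self_sub_mul_self_eq]

theorem neg_smul_one_add_mul_self_eq' (r : R) (x : A) :
    -((r * r) • (1 : A)) + x * x = (x - r • (1 : A)) * (x + r • (1 : A)) := by
  rw [neg_add_eq_sub, ← smul_one_mul_self, (commute_smul_one x r).mul_self_sub_mul_self_eq']

end ScalarShift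

theorem exterior_DtN_formulas_general (A : Type*) [Ring A] [Algebra ℚ A]
    (K S K' T : A)
    (h1 : S * T = -((1/4 : ℚ) • (1 : A)) + K * K)
    (h2 : T * S = -((1/4 : ℚ) • (1 : A)) + K' * K')
    (h3 : K * S = S * K')
    [Invertible S]
    [Invertible (K - (1/2 : ℚ) • (1 : A))]
    [Invertible (K' - (1/2 : ℚ) • (1 : A))] :
    ⅟(K' - (1/2 : ℚ) • (1 : A)) * T = ⅟S * (K + (1/2 : ℚ) • (1 : A)) ∧
    ⅟S * (K + (1/2 : ℚ) • (1 : A)) = T * ⅟(K - (1/2 : ℚ) • (1 : A)) ∧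
    T * ⅟(K - (1/2 : ℚ) • (1 : A)) = (K' + (1/2 : ℚ) • (1 : A)) * ⅟S := by
  rw [show (1/4 : ℚ) = 1/2 * (1/2) by norm_num] at h1 h2
  have hS : SemiconjBy S (K' - (1/2 : ℚ) • (1 : A)) (K - (1/2 : ℚ) • (1 : A)) :=
    SemiconjBy.sub_right h3.symm (commute_smul_one S _)
  exact ⟨invOf_mul_eq_invOf_mul_of_mul_eq (h1.trans (neg_smul_one_add_mul_self_eq' _ K)) hS,
    invOf_mul_eq_mul_invOf_of_mul_eq (h1.trans (neg_smul_one_add_mul_self_eq _ K)),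
    mul_invOf_eq_mul_invOf_of_mul_eq (h2.trans (neg_smul_one_add_mul_self_eq _ K')) hS⟩

/-- Under the Calderón identities, assuming `S`, `K - (1/2)•1`, and `K' - (1/2)•1`
are invertible, the four expressions for the exterior Dirichlet-to-Neumann map
`Λ₊` agree. -/
theorem exterior_DtN_formulas (A : Type*) [Ring A] [Algebra ℚ A]
    (K S K' T : A)
    (h1 : S * T = -((1/4 : ℚ) • (1 : A)) + K * K)
    (h2 : T * S = -((1/4 : ℚ) • (1 : A)) + K' * K')
    (h3 : K * S = S * K')
    (h4 : T * K = K' * T)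
    [Invertible S]
    [Invertible (K - (1/2 : ℚ) • (1 : A))]
    [Invertible (K' - (1/2 : ℚ) • (1 : A))] :
    ⅟(K' - (1/2 : ℚ) • (1 : A)) * T = ⅟S * (K + (1/2 : ℚ) • (1 : A)) ∧
    ⅟S * (K + (1/2 : ℚ) • (1 : A)) = T * ⅟(K - (1/2 : ℚ) • (1 : A)) ∧
    T * ⅟(K - (1/2 : ℚ) • (1 : A)) = (K' + (1/2 : ℚ) • (1 : A)) * ⅟S :=
  exterior_DtN_formulas_general A K S K' T h1 h2 h3
end

section
/- Let A be a (possibly noncommutative) ring that is an algebra over ℚ, and let K, S, K', T ∈ A satisfy S*T = -(1/4)•1 + K*K, T*S = -(1/4)•1 + K'*K', K*S = S*K', and T*K = K'*T. Assume S, K + (1/2)•1, and K' + (1/2)•1 are invertible in A. Then the four elements (K' + (1/2)•1)⁻¹ * T, S⁻¹ * (K − (1/2)•1), T * (K + (1/2)•1)⁻¹, and (K' − (1/2)•1) * S⁻¹ are all equal. (This common element is the interior Dirichlet-to-Neumann map Λ₋.) -/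
/-!
Since `½ • 1` is central, the first Calderón identity factors as `S T = (K - ½)(K + ½)`, and the
intertwining relations `K S = S K'`, `T K = K' T` survive shifting `K, K'` by `±½`. Each equality
between two of the four expressions is then an identity `a b = c d` with `a`, `d` invertible,
rewritten as `a⁻¹ c = b d⁻¹`.
-/

theorem invOf_mul_eq_mul_invOf_of_mul_eq_mul {M : Type*} [Monoid M] {a b c d : M}
    [Invertible a] [Invertible d] (h : a * b = c * d) : ⅟a * c = b * ⅟d := by
  rw [invOf_mul_eq_iff_eq_mul_left, ← mul_assoc, h, mul_assoc, mul_invOf_self, mul_one]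

section SmulOne

variable {R A : Type*} [CommSemiring R] [Ring A] [Algebra R A]

theorem sub_smul_one_mul_add_smul_one (x : A) (r : R) :
    (x - r • (1 : A)) * (x + r • (1 : A)) = x * x - (r * r) • (1 : A) := by
  rw [← ((Commute.one_right x).smul_right r).mul_self_sub_mul_self_eq', smul_mul_smul, mul_one]

theorem SemiconjBy.add_smul_one {a x y : A} (h : SemiconjBy a x y) (r : R) :
    SemiconjBy a (x + r • (1 : A)) (y + r • (1 : A)) :=
  h.add_right ((Commute.one_right a).smul_right r)

theorem SemiconjBy.sub_smul_one {a x y : A} (h : SemiconjBy a x y) (r : R) :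
    SemiconjBy a (x - r • (1 : A)) (y - r • (1 : A)) :=
  h.sub_right ((Commute.one_right a).smul_right r)

end SmulOne

theorem interior_DtN_formulas_general (A : Type*) [Ring A] [Algebra ℚ A]
    (K S K' T : A)
    (h1 : S * T = -((1/4 : ℚ) • (1 : A)) + K * K)
    (h3 : K * S = S * K')
    (h4 : T * K = K' * T)
    [Invertible S]
    [Invertible (K + (1/2 : ℚ) • (1 : A))]
    [Invertible (K' + (1/2 : ℚ) • (1 : A))] :
    ⅟(K' + (1/2 : ℚ) • (1 : A)) * T = ⅟S * (K - (1/2 : ℚ) • (1 : A)) ∧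
    ⅟S * (K - (1/2 : ℚ) • (1 : A)) = T * ⅟(K + (1/2 : ℚ) • (1 : A)) ∧
    T * ⅟(K + (1/2 : ℚ) • (1 : A)) = (K' - (1/2 : ℚ) • (1 : A)) * ⅟S := by
  have hST : S * T = (K - (1/2 : ℚ) • (1 : A)) * (K + (1/2 : ℚ) • (1 : A)) := by
    rw [h1, sub_smul_one_mul_add_smul_one, neg_add_eq_sub]
    norm_num
  have hTK : T * (K + (1/2 : ℚ) • (1 : A)) = (K' + (1/2 : ℚ) • (1 : A)) * T :=
    SemiconjBy.add_smul_one h4 _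
  have hSK' : S * (K' - (1/2 : ℚ) • (1 : A)) = (K - (1/2 : ℚ) • (1 : A)) * S :=
    SemiconjBy.sub_smul_one h3.symm _
  have e1 := invOf_mul_eq_mul_invOf_of_mul_eq_mul hTK.symm
  have e2 := invOf_mul_eq_mul_invOf_of_mul_eq_mul hST
  have e3 := invOf_mul_eq_mul_invOf_of_mul_eq_mul hSK'
  exact ⟨e1.trans e2.symm, e2, e2.symm.trans e3⟩

/-- Under the Calderón identities, assuming `S`, `K + (1/2)•1`, and `K' + (1/2)•1`
are invertible, the four expressions for the interior Dirichlet-to-Neumann map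
`Λ₋` agree. -/
theorem interior_DtN_formulas (A : Type*) [Ring A] [Algebra ℚ A]
    (K S K' T : A)
    (h1 : S * T = -((1/4 : ℚ) • (1 : A)) + K * K)
    (h2 : T * S = -((1/4 : ℚ) • (1 : A)) + K' * K')
    (h3 : K * S = S * K')
    (h4 : T * K = K' * T)
    [Invertible S]
    [Invertible (K + (1/2 : ℚ) • (1 : A))]
    [Invertible (K' + (1/2 : ℚ) • (1 : A))] :
    ⅟(K' + (1/2 : ℚ) • (1 : A)) * T = ⅟S * (K - (1/2 : ℚ) • (1 : A)) ∧
    ⅟S * (K - (1/2 : ℚ) • (1 : A)) = T * ⅟(K + (1/2 : ℚ) • (1 : A)) ∧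
    T * ⅟(K + (1/2 : ℚ) • (1 : A)) = (K' - (1/2 : ℚ) • (1 : A)) * ⅟S :=
  interior_DtN_formulas_general A K S K' T h1 h3 h4
end
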